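/- For all polynomials f, g ∈ 𝕋[x_1,…,x_n] and every integer k ≥ 1, the polynomials (f ⊕ g)^k and f^k ⊕ g^k are equivalent: ((f ⊕ g)^k)(a) = (f^k ⊕ g^k)(a) for every a ∈ 𝕋^n. -/

import Mathlib

/-- The extended tropical semiring `𝕋`: tangible reals `(a, false)`,
ghost reals `(a, true)`, and `none` = `-∞`. -/
def T : Type := Option (ℝ × Bool)

namespace T

/-- The tangible element of value `a`. -/
def tang (a : ℝ) : T := some (a, false)

/-- The ghost element `a^ν` of value `a`. -/
def ghost (a : ℝ) : T := some (a, true)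

/-- Tropical addition on `𝕋`. -/
noncomputable def add : T → T → T
  | none, y => y
  | some p, none => some p
  | some (a, s), some (b, t) =>
      if a < b then some (b, t) else if b < a then some (a, s) else some (a, true)

/-- Tropical multiplication on `𝕋`. -/
noncomputable def mul : T → T → T
  | none, _ => none
  | some _, none => none
  | some (a, s), some (b, t) => some (a + b, s || t)

lemma add_assoc' : ∀ x y z : T, add (add x y) z = add x (add y z) := by
  rintro (_ | ⟨a, s⟩) (_ | ⟨b, t⟩) (_ | ⟨c, u⟩) <;>
    simp only [add] <;>
    (try delta T) <;> (try split_ifs) <;>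
    simp only [add] <;>
    (try delta T) <;> (try split_ifs) <;>
    first
      | rfl
      | (exfalso; linarith)
      | (refine congrArg some ?_; refine Prod.ext ?_ ?_ <;>
          first | rfl | linarith | simp)

lemma add_comm' : ∀ x y : T, add x y = add y x := by
  rintro (_ | ⟨a, s⟩) (_ | ⟨b, t⟩) <;>
    simp only [add] <;>
    (try delta T) <;> (try split_ifs) <;>
    first
      | rfl
      | (exfalso; linarith)
      | (refine congrArg some ?_; refine Prod.ext ?_ ?_ <;>
          first | rfl | linarith | simp)

lemma mul_assoc' : ∀ x y z : T, mul (mul x y) z = mul x (mul y z) := by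
  rintro (_ | ⟨a, s⟩) (_ | ⟨b, t⟩) (_ | ⟨c, u⟩) <;>
    simp [mul, add_assoc, Bool.or_assoc] <;> rfl

lemma mul_comm' : ∀ x y : T, mul x y = mul y x := by
  rintro (_ | ⟨a, s⟩) (_ | ⟨b, t⟩) <;> simp [mul, add_comm, Bool.or_comm] <;> rfl

lemma left_distrib' : ∀ x y z : T, mul x (add y z) = add (mul x y) (mul x z) := by
  rintro (_ | ⟨a, s⟩) (_ | ⟨b, t⟩) (_ | ⟨c, u⟩) <;>
    simp only [add, mul] <;>
    (try delta T) <;> (try split_ifs) <;>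
    simp only [add, mul] <;>
    (try delta T) <;> (try split_ifs) <;>
    first
      | rfl
      | (exfalso; linarith)
      | (refine congrArg some ?_; refine Prod.ext ?_ ?_ <;>
          first | rfl | linarith | simp)

noncomputable instance : Zero T := ⟨none⟩
noncomputable instance : One T := ⟨some (0, false)⟩
noncomputable instance : Add T := ⟨add⟩
noncomputable instance : Mul T := ⟨mul⟩

noncomputable instance : CommSemiring T where
  add := (· + ·)
  zero := 0
  add_assoc := add_assoc'
  zero_add := fun x => by cases x <;> rfl
  add_zero := fun x => by cases x <;> rfl
  add_comm := add_comm'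
  mul := (· * ·)
  one := 1
  mul_assoc := mul_assoc'
  one_mul := fun x => by
    show mul (some (0, false)) x = x
    rcases x with _ | ⟨a, s⟩ <;> simp [mul] <;> rfl
  mul_one := fun x => by
    show mul x (some (0, false)) = x
    rcases x with _ | ⟨a, s⟩ <;> simp [mul] <;> rfl
  mul_comm := mul_comm'
  zero_mul := fun x => by cases x <;> rfl
  mul_zero := fun x => by cases x <;> rfl
  left_distrib := left_distrib'
  right_distrib := fun x y z => by
    show mul (add x y) z = add (mul x z) (mul y z)
    rw [mul_comm', left_distrib', mul_comm' z x, mul_comm' z y]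
  nsmul := nsmulRec

/-- Membership in the ghost part `𝕌̄ = 𝕌 ∪ {-∞}` of `𝕋`. -/
def isGhost : T → Prop
  | none => True
  | some (_, s) => s = true

/-- Membership in the tangible part `ℝ ∪ {-∞}` of `𝕋`. -/
def isTangible : T → Prop
  | none => True
  | some (_, s) => s = false

/-- The underlying real value (junk value `0` at `-∞`); this is `π` on elements `≠ -∞`. -/
def val : T → ℝ
  | none => 0
  | some (a, _) => a

/-- The ghost map `ν`. -/
def nu : T → T
  | none => none
  | some (a, _) => some (a, true)

end T

namespace T

/-- The model value in the half line `[0,∞)`: `-∞ ↦ 0`, an element of value `a ↦ exp a`. -/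
noncomputable def gval : T → ℝ
  | none => 0
  | some (a, _) => Real.exp a

lemma nu_isGhost : ∀ x : T, isGhost (nu x)
  | none => trivial
  | some (_, _) => rfl

lemma gval_injOn_tang : Set.InjOn gval {x : T | isTangible x} := by
  rintro (_ | ⟨a, s⟩) hx (_ | ⟨b, t⟩) hy h <;>
    simp only [gval, Set.mem_setOf_eq, isTangible] at hx hy h
  · rfl
  · exact absurd h.symm (Real.exp_pos b).ne'
  · exact absurd h (Real.exp_pos a).ne'
  · rw [Real.exp_eq_exp] at h; subst hx; subst hy; subst h; rfl

lemma gval_injOn_ghost : Set.InjOn gval {x : T | isGhost x} := by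
  rintro (_ | ⟨a, s⟩) hx (_ | ⟨b, t⟩) hy h <;>
    simp only [gval, Set.mem_setOf_eq, isGhost] at hx hy h
  · rfl
  · exact absurd h.symm (Real.exp_pos b).ne'
  · exact absurd h (Real.exp_pos a).ne'
  · rw [Real.exp_eq_exp] at h; subst hx; subst hy; subst h; rfl

lemma gval_image_tang : gval '' {x : T | isTangible x} = Set.Ici 0 := by
  ext y
  constructor
  · rintro ⟨(_ | ⟨a, s⟩), hx, rfl⟩
    · exact Set.mem_Ici.mpr le_rfl
    · exact le_of_lt (by simpa [gval] using Real.exp_pos a)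
  · intro hy
    rcases eq_or_lt_of_le (Set.mem_Ici.mp hy : (0 : ℝ) ≤ y) with h | h
    · exact ⟨none, trivial, h⟩
    · exact ⟨some (Real.log y, false), rfl, by simp [gval, Real.exp_log h]⟩

lemma gval_image_ghost : gval '' {x : T | isGhost x} = Set.Ici 0 := by
  ext y
  constructor
  · rintro ⟨(_ | ⟨a, s⟩), hx, rfl⟩
    · exact Set.mem_Ici.mpr le_rfl
    · exact le_of_lt (by simpa [gval] using Real.exp_pos a)
  · intro hy
    rcases eq_or_lt_of_le (Set.mem_Ici.mp hy : (0 : ℝ) ≤ y) with h | h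
    · exact ⟨none, trivial, h⟩
    · exact ⟨some (Real.log y, true), rfl, by simp [gval, Real.exp_log h]⟩

/-- The closed sets of the topology on `𝕋`: both the tangible and the ghost layers are
closed in the model `[0,∞)` of `𝕌̄`, and the ghost image of the tangible layer is
contained in the set. -/
def TIsClosed (W : Set T) : Prop :=
  IsClosed (gval '' (W ∩ {x | isTangible x})) ∧
  IsClosed (gval '' (W ∩ {x | isGhost x})) ∧
  nu '' (W ∩ {x | isTangible x}) ⊆ W ∩ {x | isGhost x}

/-- The topology on `𝕋`. -/
noncomputable instance : TopologicalSpace T :=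
  TopologicalSpace.ofClosed {W | TIsClosed W}
    (by
      refine ⟨?_, ?_, ?_⟩ <;> simp [TIsClosed])
    (fun A hA => by
      rcases A.eq_empty_or_nonempty with rfl | hne
      · rw [Set.sInter_empty]
        refine ⟨?_, ?_, ?_⟩
        · rw [Set.univ_inter, gval_image_tang]; exact isClosed_Ici
        · rw [Set.univ_inter, gval_image_ghost]; exact isClosed_Ici
        · rintro y ⟨x, ⟨-, _⟩, rfl⟩
          exact ⟨trivial, nu_isGhost x⟩
      · have : Nonempty A := hne.to_subtype
        have h1 : (⋂₀ A) ∩ {x : T | isTangible x}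
            = ⋂ (W : A), ((W : Set T) ∩ {x | isTangible x}) := by
          ext x
          simp only [Set.mem_inter_iff, Set.mem_sInter, Set.mem_iInter, Set.mem_setOf_eq]
          constructor
          · rintro ⟨h, ht⟩ W; exact ⟨h W W.2, ht⟩
          · intro h
            obtain ⟨W, hW⟩ := hne
            exact ⟨fun V hV => (h ⟨V, hV⟩).1, (h ⟨W, hW⟩).2⟩
        have h2 : (⋂₀ A) ∩ {x : T | isGhost x}
            = ⋂ (W : A), ((W : Set T) ∩ {x | isGhost x}) := by
          ext x
          simp only [Set.mem_inter_iff, Set.mem_sInter, Set.mem_iInter, Set.mem_setOf_eq]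
          constructor
          · rintro ⟨h, ht⟩ W; exact ⟨h W W.2, ht⟩
          · intro h
            obtain ⟨W, hW⟩ := hne
            exact ⟨fun V hV => (h ⟨V, hV⟩).1, (h ⟨W, hW⟩).2⟩
        refine ⟨?_, ?_, ?_⟩
        · rw [h1, Set.InjOn.image_iInter_eq
            (gval_injOn_tang.mono (Set.iUnion_subset fun W => Set.inter_subset_right))]
          exact isClosed_iInter fun W => (hA W.2).1
        · rw [h2, Set.InjOn.image_iInter_eq
            (gval_injOn_ghost.mono (Set.iUnion_subset fun W => Set.inter_subset_right))]
          exact isClosed_iInter fun W => (hA W.2).2.1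
        · rintro y ⟨x, ⟨hx, hxt⟩, rfl⟩
          refine ⟨fun W hW => ((hA hW).2.2 ⟨x, ⟨hx W hW, hxt⟩, rfl⟩).1, nu_isGhost x⟩)
    (fun A hA B hB => by
      have h1 : (A ∪ B) ∩ {x : T | isTangible x}
          = (A ∩ {x | isTangible x}) ∪ (B ∩ {x | isTangible x}) :=
        Set.union_inter_distrib_right A B _
      have h2 : (A ∪ B) ∩ {x : T | isGhost x}
          = (A ∩ {x | isGhost x}) ∪ (B ∩ {x | isGhost x}) :=
        Set.union_inter_distrib_right A B _
      refine ⟨?_, ?_, ?_⟩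
      · rw [h1, Set.image_union]; exact hA.1.union hB.1
      · rw [h2, Set.image_union]; exact hA.2.1.union hB.2.1
      · rintro y ⟨x, ⟨hx, hxt⟩, rfl⟩
        rcases hx with hxA | hxB
        · have h := hA.2.2 ⟨x, ⟨hxA, hxt⟩, rfl⟩
          exact ⟨Or.inl h.1, h.2⟩
        · have h := hB.2.2 ⟨x, ⟨hxB, hxt⟩, rfl⟩
          exact ⟨Or.inr h.1, h.2⟩)

end T

/-!
For `k ≥ 1`, the `k`-th power of a finite element of `𝕋` multiplies its value by `k` and keeps
its layer, because a product of ghosts is ghost and of tangibles tangible. Multiplying values by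
a positive constant preserves both strict comparisons and ties, so it commutes with `⊕`; since
evaluation is a semiring homomorphism, the equivalence follows pointwise.
-/

namespace T

def rpow (x : T) (c : ℝ) : T :=
  match x with
  | none => none
  | some (a, s) => some (c * a, s)

lemma add_rpow {c : ℝ} (hc : 0 < c) : ∀ x y : T, rpow (x + y) c = rpow x c + rpow y c
  | none, _ => rfl
  | some _, none => rfl
  | some (a, s), some (b, t) => by
    show rpow (add _ _) c = add _ _
    simp only [add, rpow, mul_lt_mul_iff_right₀ hc]
    by_cases hab : a < b <;> by_cases hba : b < a <;> simp only [hab, hba, ↓reduceIte] <;> rfl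

lemma pow_eq_rpow (x : T) {k : ℕ} (hk : k ≠ 0) : x ^ k = rpow x k := by
  induction k, Nat.one_le_iff_ne_zero.mpr hk using Nat.le_induction with
  | base =>
    rw [pow_one, Nat.cast_one]
    rcases x with _ | ⟨a, s⟩ <;> simp only [rpow, one_mul] <;> rfl
  | succ k hk ih =>
    rw [pow_succ, ih (by omega)]
    rcases x with _ | ⟨a, s⟩
    · rfl
    · show mul _ _ = _
      simp only [mul, rpow, Bool.or_self, Nat.cast_succ, add_one_mul]
      rfl

theorem add_pow_of_ne_zero (x y : T) {k : ℕ} (hk : k ≠ 0) : (x + y) ^ k = x ^ k + y ^ k := by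
  simp only [pow_eq_rpow _ hk]
  exact add_rpow (by positivity) x y

end T

/-- Proposition `thm:maximumMonomialValue.1`: `(f ⊕ g)^k ∼ f^k ⊕ g^k`. -/
theorem tropical_add_pow_equiv (n : ℕ) (f g : MvPolynomial (Fin n) T) (k : ℕ)
    (hk : 1 ≤ k) (a : Fin n → T) :
    MvPolynomial.eval a ((f + g) ^ k) = MvPolynomial.eval a (f ^ k + g ^ k) := by
  simp only [map_pow, map_add]
  exact T.add_pow_of_ne_zero _ _ (Nat.one_le_iff_ne_zero.mp hk)
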